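/- If λ ∈ ℂ and φ ∈ L²(I;ℂ) with φ ≠ 0 (as an equivalence class) satisfy ℒφ = λφ, then either λ = −b₁, or there exists a positive integer ℓ such that λ = χ₁(κ;ℓ,q)cosσ − b₁ − i·χ₂(κ;ℓ,q)sinσ or λ = χ₁(κ;ℓ,q)cosσ − b₁ + i·χ₂(κ;ℓ,q)sinσ. In other words, the eigenvalues of ℒ are exactly those listed. -/

import Mathlib

open MeasureTheory Real Set Filter
open scoped ENNReal

noncomputable section

/-- Lebesgue measure restricted to the unit interval `I = [0,1]`. -/
def muI : Measure ℝ := volume.restrict (Set.Icc (0:ℝ) 1)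

/-- The nearest-neighbor graphon `W(x,y) = 1` if `|x-y| ≤ κ` or `|x-y| ≥ 1-κ`, else `0`. -/
def Wnn (κ : ℝ) (x y : ℝ) : ℝ := if |x - y| ≤ κ ∨ |x - y| ≥ 1 - κ then 1 else 0

/-- The linearization operator `ℒ` on `L²(I; ℂ)`, given pointwise:
`(ℒφ)(x) = ∫_I W(x,y) cos(2πq(y−x)+σ)(φ(y)−φ(x)) dy − b₁ φ(x)`. -/
def Lop (κ : ℝ) (q : ℕ) (σ b₁ : ℝ) (φ : ℝ → ℂ) (x : ℝ) : ℂ :=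
  (∫ y in Set.Icc (0:ℝ) 1,
      (Wnn κ x y : ℂ) * (Real.cos (2 * π * q * (y - x) + σ) : ℂ) * (φ y - φ x))
    - (b₁ : ℂ) * φ x

/-- The quantity `χ₁(κ; ℓ, q)`. -/
def chi1 (κ : ℝ) (l q : ℕ) : ℝ :=
  if l = q then
    κ + Real.sin (4 * π * q * κ) / (4 * π * q) - Real.sin (2 * π * q * κ) / (π * q)
  else
    Real.sin (2 * π * ((l:ℝ) - q) * κ) / (2 * π * ((l:ℝ) - q))
      + Real.sin (2 * π * ((l:ℝ) + q) * κ) / (2 * π * ((l:ℝ) + q))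
      - Real.sin (2 * π * q * κ) / (π * q)

/-- The quantity `χ₂(κ; ℓ, q)`. -/
def chi2 (κ : ℝ) (l q : ℕ) : ℝ :=
  if l = q then
    κ - Real.sin (4 * π * q * κ) / (4 * π * q)
  else
    Real.sin (2 * π * ((l:ℝ) - q) * κ) / (2 * π * ((l:ℝ) - q))
      - Real.sin (2 * π * ((l:ℝ) + q) * κ) / (2 * π * ((l:ℝ) + q))

/-!
Since the kernel `K(x,y) = W(x,y) cos(2πq(y-x)+σ)` depends only on `y - x` modulo `1`, the
operator is a convolution on the circle plus a multiple of the identity, so the Fourier modes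
`e_n(x) = e^{2πinx}` diagonalise it: `∫ e_n(x) K(x,y) dx = c(-n) e_n(y)` with `c(m)` the Fourier
coefficient of the periodised kernel, computed explicitly in terms of `sinc`. Pairing the
eigenvalue equation with `e_n` and using Fubini gives `(λ + c(0) + b₁ - c(-n)) φ̂(n) = 0`; by
Parseval some `φ̂(n)` is nonzero, so `λ = c(-n) - c(0) - b₁`, which is `-b₁` for `n = 0` and one
of the `χ`-expressions for `n ≠ 0`.
-/

theorem ae_eq_zero_of_fourierCoeffOn_eq_zero {a b : ℝ} (hab : a < b) {f : ℝ → ℂ}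
    (hf : MemLp f 2 (volume.restrict (Ioc a b))) (h : ∀ n, fourierCoeffOn hab f n = 0) :
    f =ᵐ[volume.restrict (Ioc a b)] 0 := by
  have hsum := hasSum_sq_fourierCoeffOn hab hf
  simp only [h, norm_zero, ne_eq, OfNat.ofNat_ne_zero, not_false_eq_true, zero_pow] at hsum
  have hnorm : ∫ x in a..b, ‖f x‖ ^ 2 = 0 := by
    have := hasSum_zero.unique hsum
    rw [eq_comm, smul_eq_zero] at this
    exact this.resolve_left (inv_ne_zero (sub_pos.2 hab).ne')
  rw [intervalIntegral.integral_of_le hab.le,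
    integral_eq_zero_iff_of_nonneg (fun x => by positivity) hf.norm.integrable_sq] at hnorm
  filter_upwards [hnorm] with x hx
  simpa using hx

theorem eq_of_integral_mul_ne_zero {α : Type*} [MeasurableSpace α] {μ : Measure α}
    [IsFiniteMeasure μ] {K : α → α → ℂ} {e φ : α → ℂ} {a b : ℂ} {C D : ℝ}
    (hK : AEStronglyMeasurable (Function.uncurry K) (μ.prod μ)) (hKC : ∀ x y, ‖K x y‖ ≤ C)
    (he : AEStronglyMeasurable e μ) (heD : ∀ x, ‖e x‖ ≤ D) (hφ : Integrable φ μ)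
    (hKφ : ∀ᵐ x ∂μ, ∫ y, K x y * φ y ∂μ = a * φ x)
    (heK : ∀ᵐ y ∂μ, ∫ x, e x * K x y ∂μ = b * e y)
    (hne : ∫ x, e x * φ x ∂μ ≠ 0) : a = b := by
  have hint : Integrable (Function.uncurry fun x y => e x * K x y * φ y) (μ.prod μ) := by
    refine Integrable.mono' ((integrable_const (D * C)).mul_prod hφ.norm)
      ((he.comp_fst.mul hK).mul hφ.aestronglyMeasurable.comp_snd) (ae_of_all _ fun z => ?_)
    have hD : 0 ≤ D := (norm_nonneg _).trans (heD z.1)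
    change ‖e z.1 * K z.1 z.2 * φ z.2‖ ≤ _
    rw [norm_mul, norm_mul]
    gcongr
    · exact heD z.1
    · exact hKC z.1 z.2
  refine mul_right_cancel₀ hne ?_
  calc a * ∫ x, e x * φ x ∂μ
      = ∫ x, ∫ y, e x * K x y * φ y ∂μ ∂μ := by
        rw [← integral_const_mul]
        refine integral_congr_ae ?_
        filter_upwards [hKφ] with x hx
        simp only [mul_assoc, integral_const_mul, hx]
        ring
    _ = ∫ y, ∫ x, e x * K x y * φ y ∂μ ∂μ := integral_integral_swap hint
    _ = b * ∫ x, e x * φ x ∂μ := by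
        rw [← integral_const_mul]
        refine integral_congr_ae ?_
        filter_upwards [heK] with y hy
        rw [integral_mul_const, hy]
        ring

theorem Function.Periodic.intervalIntegral_comp_sub_left {E : Type*} [NormedAddCommGroup E]
    [NormedSpace ℝ E] {f : ℝ → E} {T : ℝ} (hf : Function.Periodic f T) (y : ℝ) :
    ∫ x in (0:ℝ)..T, f (y - x) = ∫ x in (0:ℝ)..T, f x := by
  rw [intervalIntegral.integral_comp_sub_left, sub_zero]
  simpa using hf.intervalIntegral_add_eq (y - T) 0

theorem Function.Periodic.intervalIntegral_comp_sub_right {E : Type*} [NormedAddCommGroup E]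
    [NormedSpace ℝ E] {f : ℝ → E} {T : ℝ} (hf : Function.Periodic f T) (y : ℝ) :
    ∫ x in (0:ℝ)..T, f (x - y) = ∫ x in (0:ℝ)..T, f x := by
  rw [intervalIntegral.integral_comp_sub_right, zero_sub, sub_eq_neg_add]
  simpa using hf.intervalIntegral_add_eq (-y) 0

theorem Real.mul_sinc_mul (x : ℝ) {a : ℝ} (ha : a ≠ 0) : x * sinc (a * x) = sin (a * x) / a := by
  rcases eq_or_ne x 0 with rfl | hx
  · simp
  · rw [sinc_of_ne_zero (mul_ne_zero ha hx)]
    field_simp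

namespace NearestNeighbor

def expMode (n : ℤ) (x : ℝ) : ℂ := Complex.exp (2 * π * Complex.I * n * x)

lemma expMode_eq_exp_ofReal_mul_I (n : ℤ) (x : ℝ) :
    expMode n x = Complex.exp ((2 * π * n * x : ℝ) * Complex.I) := by
  rw [expMode]; push_cast; ring_nf

lemma norm_expMode (n : ℤ) (x : ℝ) : ‖expMode n x‖ = 1 := by
  rw [expMode_eq_exp_ofReal_mul_I, Complex.norm_exp_ofReal_mul_I]

lemma continuous_expMode (n : ℤ) : Continuous (expMode n) := by
  unfold expMode; fun_prop

@[simp] lemma expMode_zero (x : ℝ) : expMode 0 x = 1 := by simp [expMode]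

lemma expMode_sub (n : ℤ) (y t : ℝ) : expMode n (y - t) = expMode n y * expMode (-n) t := by
  simp only [expMode, ← Complex.exp_add]; push_cast; ring_nf

lemma expMode_periodic (n : ℤ) : Function.Periodic (expMode n) 1 := by
  intro t
  rw [expMode, expMode, show 2 * π * Complex.I * n * ↑(t + 1)
    = 2 * π * Complex.I * n * t + n * (2 * π * Complex.I) by push_cast; ring,
    Complex.exp_add, Complex.exp_int_mul_two_pi_mul_I, mul_one]

lemma muI_eq_restrict_Ioc : muI = volume.restrict (Ioc 0 1) :=
  Measure.restrict_congr_set Ioc_ae_eq_Icc |>.symm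

lemma integral_muI (f : ℝ → ℂ) : ∫ x, f x ∂muI = ∫ x in (0:ℝ)..1, f x := by
  rw [muI_eq_restrict_Ioc, intervalIntegral.integral_of_le zero_le_one]

instance : IsFiniteMeasure muI := by
  rw [muI]; infer_instance

theorem exists_integral_expMode_mul_ne_zero {φ : ℝ → ℂ} (hφ : MemLp φ 2 muI)
    (hφ0 : ¬ φ =ᵐ[muI] 0) : ∃ n : ℤ, ∫ x, expMode n x * φ x ∂muI ≠ 0 := by
  by_contra! h
  rw [muI_eq_restrict_Ioc] at hφ hφ0
  refine hφ0 (ae_eq_zero_of_fourierCoeffOn_eq_zero zero_lt_one hφ fun n => ?_)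
  rw [fourierCoeffOn_eq_integral, ← integral_muI]
  simp only [fourier_coe_apply, smul_eq_mul, sub_zero, div_one, one_smul]
  simpa [expMode] using h (-n)

lemma exp_neg_ofReal_mul_I (x : ℝ) :
    Complex.exp (-x * Complex.I) = Real.cos x - Real.sin x * Complex.I := by
  rw [← Complex.ofReal_neg, Complex.exp_ofReal_mul_I, Real.cos_neg, Real.sin_neg]
  push_cast
  ring

lemma integral_expMode_symm (κ : ℝ) (j : ℤ) :
    ∫ t in (-κ)..κ, expMode j t = ((2 * κ * sinc (2 * π * j * κ) : ℝ) : ℂ) := by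
  rcases eq_or_ne j 0 with rfl | hj
  · simp [two_mul]
  have hc : 2 * π * Complex.I * j ≠ 0 := by simp [hj, Real.pi_ne_zero, Complex.I_ne_zero]
  have ha : 2 * π * (j : ℝ) ≠ 0 := by simp [hj, Real.pi_ne_zero]
  simp only [expMode, mul_assoc 2 κ, Real.mul_sinc_mul κ ha]
  rw [integral_exp_mul_complex hc,
    show 2 * π * Complex.I * j * κ = ((2 * π * j * κ : ℝ) : ℂ) * Complex.I by push_cast; ring,
    show 2 * π * Complex.I * j * ((-κ : ℝ) : ℂ) = -((2 * π * j * κ : ℝ) : ℂ) * Complex.I by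
      push_cast; ring, Complex.exp_ofReal_mul_I, exp_neg_ofReal_mul_I]
  push_cast
  field_simp
  ring

/-- `∫₀¹ k(t) e^{2πimt} dt` for the periodised kernel `k = circleKernel κ q σ`
(`integral_circleKernel_mul_expMode`). -/
def kernelEigenvalue (κ : ℝ) (q : ℕ) (σ : ℝ) (m : ℤ) : ℂ :=
  κ * (Complex.exp (σ * Complex.I) * (sinc (2 * π * (m + q) * κ) : ℂ)
    + Complex.exp (-σ * Complex.I) * (sinc (2 * π * (m - q) * κ) : ℂ))

lemma cos_mul_expMode (q : ℕ) (σ : ℝ) (m : ℤ) (t : ℝ) :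
    (Real.cos (2 * π * q * t + σ) : ℂ) * expMode m t
      = (Complex.exp (σ * Complex.I) * expMode (m + q) t
        + Complex.exp (-σ * Complex.I) * expMode (m - q) t) / 2 := by
  rw [Complex.ofReal_cos, Complex.cos, expMode, expMode, expMode]
  simp only [add_mul, div_mul_eq_mul_div, ← Complex.exp_add]
  congr 2 <;> congr 1 <;> push_cast <;> ring

lemma integral_cos_mul_expMode (κ : ℝ) (q : ℕ) (σ : ℝ) (m : ℤ) :
    ∫ t in (-κ)..κ, (Real.cos (2 * π * q * t + σ) : ℂ) * expMode m t
      = kernelEigenvalue κ q σ m := by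
  have hint (j : ℤ) (c : ℂ) : IntervalIntegrable (fun t => c * expMode j t) volume (-κ) κ :=
    (continuous_const.mul (continuous_expMode j)).intervalIntegrable _ _
  simp only [cos_mul_expMode]
  rw [intervalIntegral.integral_div, intervalIntegral.integral_add (hint _ _) (hint _ _),
    intervalIntegral.integral_const_mul, intervalIntegral.integral_const_mul,
    integral_expMode_symm, integral_expMode_symm, kernelEigenvalue]
  push_cast
  ring

/-- `‖(t : UnitAddCircle)‖` is the distance from `t` to `ℤ`. -/
def circleKernel (κ : ℝ) (q : ℕ) (σ : ℝ) (t : ℝ) : ℂ :=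
  if ‖(t : UnitAddCircle)‖ ≤ κ then (Real.cos (2 * π * q * t + σ) : ℂ) else 0

section circleKernel

variable (κ : ℝ) (q : ℕ) (σ : ℝ)

lemma circleKernel_periodic : Function.Periodic (circleKernel κ q σ) 1 := by
  intro t
  rw [circleKernel, circleKernel, AddCircle.coe_add_period,
    show 2 * π * q * (t + 1) + σ = 2 * π * q * t + σ + q * (2 * π) by ring,
    Real.cos_add_nat_mul_two_pi]

lemma norm_circleKernel_le (t : ℝ) : ‖circleKernel κ q σ t‖ ≤ 1 := by
  unfold circleKernel
  split_ifs
  · rw [Complex.norm_real, Real.norm_eq_abs]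
    exact Real.abs_cos_le_one _
  · simp

lemma measurable_circleKernel : Measurable (circleKernel κ q σ) :=
  Measurable.ite (measurableSet_le (by fun_prop) measurable_const) (by fun_prop) measurable_const

lemma intervalIntegrable_circleKernel_mul_expMode (m : ℤ) (a b : ℝ) :
    IntervalIntegrable (fun t => circleKernel κ q σ t * expMode m t) volume a b :=
  intervalIntegrable_const.mono_fun'
    ((measurable_circleKernel κ q σ).mul (continuous_expMode m).measurable).aestronglyMeasurable
    (ae_of_all _ fun t => by
      simpa [norm_expMode] using norm_circleKernel_le κ q σ t)

lemma circleKernel_of_abs_le_half {t : ℝ} (ht : |t| ≤ 1 / 2) :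
    circleKernel κ q σ t = if |t| ≤ κ then (Real.cos (2 * π * q * t + σ) : ℂ) else 0 := by
  rw [circleKernel, (AddCircle.norm_coe_eq_abs_iff _ one_ne_zero).2 (by simpa using ht)]

end circleKernel

lemma integral_circleKernel_mul_expMode {κ : ℝ} (hκ0 : 0 ≤ κ) (hκ : κ ≤ 1 / 2) (q : ℕ) (σ : ℝ)
    (m : ℤ) :
    ∫ t in (0:ℝ)..1, circleKernel κ q σ t * expMode m t = kernelEigenvalue κ q σ m := by
  set F := fun t => circleKernel κ q σ t * expMode m t
  have hint := intervalIntegrable_circleKernel_mul_expMode κ q σ m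
  have hvanish {a b : ℝ} (hab : a ≤ b) (h : ∀ t ∈ Ioo a b, κ < |t| ∧ |t| ≤ 1 / 2) :
      ∫ t in a..b, F t = 0 := by
    rw [intervalIntegral.integral_congr_Ioo_of_le hab (g := fun _ => 0) fun t ht => ?_,
      intervalIntegral.integral_zero]
    simp only [F, circleKernel_of_abs_le_half κ q σ (h t ht).2, if_neg (h t ht).1.not_ge, zero_mul]
  have hleft : ∫ t in (-1/2:ℝ)..(-κ), F t = 0 := hvanish (by linarith) fun t ht => by
    rw [abs_of_neg (by linarith [ht.2])]; constructor <;> linarith [ht.1, ht.2]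
  have hright : ∫ t in κ..1/2, F t = 0 := hvanish hκ fun t ht => by
    rw [abs_of_pos (by linarith [ht.1])]; constructor <;> linarith [ht.1, ht.2]
  have hmid : ∫ t in (-κ)..κ, F t
      = ∫ t in (-κ)..κ, (Real.cos (2 * π * q * t + σ) : ℂ) * expMode m t := by
    refine intervalIntegral.integral_congr_Ioo_of_le (by linarith) fun t ht => ?_
    have ht' : |t| < κ := abs_lt.2 ht
    simp only [F, circleKernel_of_abs_le_half κ q σ (t := t) (by linarith), if_pos ht'.le]
  have hperiod := ((circleKernel_periodic κ q σ).mul (expMode_periodic m)).intervalIntegral_add_eq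
    0 (-1/2)
  rw [zero_add, show (-1/2 : ℝ) + 1 = 1/2 by norm_num] at hperiod
  calc ∫ t in (0:ℝ)..1, F t
      = (∫ t in (-1/2:ℝ)..(-κ), F t) + (∫ t in (-κ)..κ, F t) + ∫ t in κ..1/2, F t := by
        rw [intervalIntegral.integral_add_adjacent_intervals (hint _ _) (hint _ _),
          intervalIntegral.integral_add_adjacent_intervals (hint _ _) (hint _ _)]
        exact hperiod
    _ = kernelEigenvalue κ q σ m := by
        rw [hleft, hright, hmid, zero_add, add_zero, integral_cos_mul_expMode]

lemma integral_expMode_mul_circleKernel_sub {κ : ℝ} (hκ0 : 0 ≤ κ) (hκ : κ ≤ 1 / 2) (q : ℕ)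
    (σ : ℝ) (n : ℤ) (y : ℝ) :
    ∫ x in (0:ℝ)..1, expMode n x * circleKernel κ q σ (y - x)
      = kernelEigenvalue κ q σ (-n) * expMode n y := by
  have hF := ((circleKernel_periodic κ q σ).mul
    (expMode_periodic (-n))).intervalIntegral_comp_sub_left y
  simp only [Pi.mul_apply] at hF
  calc ∫ x in (0:ℝ)..1, expMode n x * circleKernel κ q σ (y - x)
      = expMode n y * ∫ x in (0:ℝ)..1, circleKernel κ q σ (y - x) * expMode (-n) (y - x) := by
        rw [← intervalIntegral.integral_const_mul]
        congr 1 with x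
        have hx : expMode n x = expMode n y * expMode (-n) (y - x) := by
          rw [← expMode_sub, sub_sub_cancel]
        rw [hx]
        ring
    _ = kernelEigenvalue κ q σ (-n) * expMode n y := by
        rw [hF, integral_circleKernel_mul_expMode hκ0 hκ, mul_comm]

lemma integral_circleKernel_sub {κ : ℝ} (hκ0 : 0 ≤ κ) (hκ : κ ≤ 1 / 2) (q : ℕ) (σ : ℝ)
    (x : ℝ) : ∫ y in (0:ℝ)..1, circleKernel κ q σ (y - x) = kernelEigenvalue κ q σ 0 := by
  rw [(circleKernel_periodic κ q σ).intervalIntegral_comp_sub_right x,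
    ← integral_circleKernel_mul_expMode hκ0 hκ q σ 0]
  simp

lemma norm_coe_unitAddCircle_of_mem_Icc {t : ℝ} (ht : t ∈ Icc (0:ℝ) 1) :
    ‖(t : UnitAddCircle)‖ = min t (1 - t) := by
  rcases le_or_gt t (1 / 2) with h | h
  · rw [(AddCircle.norm_coe_eq_abs_iff _ one_ne_zero).2
        (by rw [abs_of_nonneg ht.1, abs_one]; exact h), abs_of_nonneg ht.1,
      min_eq_left (by linarith)]
  · have hcoe : ((t - 1 : ℝ) : UnitAddCircle) = t := by
      simpa only [sub_add_cancel] using (AddCircle.coe_add_period (1:ℝ) (t - 1)).symm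
    rw [← hcoe, (AddCircle.norm_coe_eq_abs_iff _ one_ne_zero).2 (by
        rw [abs_of_nonpos (by linarith [ht.2]), abs_one]; linarith),
      abs_of_nonpos (by linarith [ht.2]), min_eq_right (by linarith)]
    ring

lemma Wnn_mul_cos_eq_circleKernel (κ : ℝ) (q : ℕ) (σ : ℝ) {x y : ℝ} (hx : x ∈ Icc (0:ℝ) 1)
    (hy : y ∈ Icc (0:ℝ) 1) :
    (Wnn κ x y : ℂ) * (Real.cos (2 * π * q * (y - x) + σ) : ℂ) = circleKernel κ q σ (y - x) := by
  have hnorm : ‖((y - x : ℝ) : UnitAddCircle)‖ = min |x - y| (1 - |x - y|) := by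
    rw [← norm_coe_unitAddCircle_of_mem_Icc ⟨abs_nonneg _, abs_le.2 ⟨by linarith [hx.1, hy.2],
      by linarith [hx.2, hy.1]⟩⟩]
    rcases le_total x y with h | h
    · rw [abs_sub_comm, abs_of_nonneg (by linarith)]
    · rw [abs_of_nonneg (by linarith), ← norm_neg, ← AddCircle.coe_neg, neg_sub]
  have hiff : (|x - y| ≤ κ ∨ |x - y| ≥ 1 - κ) ↔ ‖((y - x : ℝ) : UnitAddCircle)‖ ≤ κ := by
    rw [hnorm, min_le_iff, sub_le_comm, ge_iff_le]
  rw [Wnn, circleKernel, if_congr hiff rfl rfl]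
  split_ifs <;> simp

lemma chi1_eq_sinc (κ : ℝ) {q : ℕ} (hq : 0 < q) (l : ℕ) :
    chi1 κ l q = κ * (sinc (2 * π * ((l:ℝ) - q) * κ) + sinc (2 * π * ((l:ℝ) + q) * κ))
      - 2 * κ * sinc (2 * π * q * κ) := by
  have hπ := Real.pi_pos
  have hq' : (0:ℝ) < q := Nat.cast_pos.2 hq
  have hsum : 2 * π * ((l:ℝ) + q) ≠ 0 := by positivity
  rw [mul_add, Real.mul_sinc_mul κ hsum, mul_assoc 2 κ,
    Real.mul_sinc_mul κ (a := 2 * π * q) (by positivity)]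
  unfold chi1
  split_ifs with h
  · subst h
    rw [sub_self, mul_zero, zero_mul, sinc_zero]
    field_simp
    ring_nf
  · have hdiff : 2 * π * ((l:ℝ) - q) ≠ 0 := by
      have : (l:ℝ) ≠ q := by exact_mod_cast h
      simp [sub_ne_zero.2 this, hπ.ne']
    rw [Real.mul_sinc_mul κ hdiff]
    field_simp

lemma chi2_eq_sinc (κ : ℝ) {q : ℕ} (hq : 0 < q) (l : ℕ) :
    chi2 κ l q = κ * (sinc (2 * π * ((l:ℝ) - q) * κ) - sinc (2 * π * ((l:ℝ) + q) * κ)) := by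
  have hπ := Real.pi_pos
  have hq' : (0:ℝ) < q := Nat.cast_pos.2 hq
  have hsum : 2 * π * ((l:ℝ) + q) ≠ 0 := by positivity
  rw [mul_sub, Real.mul_sinc_mul κ hsum]
  unfold chi2
  split_ifs with h
  · subst h
    rw [sub_self, mul_zero, zero_mul, sinc_zero]
    ring_nf
  · have hdiff : 2 * π * ((l:ℝ) - q) ≠ 0 := by
      have : (l:ℝ) ≠ q := by exact_mod_cast h
      simp [sub_ne_zero.2 this, hπ.ne']
    rw [Real.mul_sinc_mul κ hdiff]

lemma kernelEigenvalue_natCast_sub_zero (κ : ℝ) {q : ℕ} (hq : 0 < q) (σ : ℝ) (l : ℕ) :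
    kernelEigenvalue κ q σ l - kernelEigenvalue κ q σ 0
      = ((chi1 κ l q * Real.cos σ : ℝ) : ℂ) - Complex.I * ((chi2 κ l q * Real.sin σ : ℝ) : ℂ) := by
  rw [kernelEigenvalue, kernelEigenvalue, chi1_eq_sinc κ hq, chi2_eq_sinc κ hq,
    Complex.exp_ofReal_mul_I, exp_neg_ofReal_mul_I,
    show 2 * π * (((0:ℤ):ℝ) + q) * κ = 2 * π * q * κ by push_cast; ring,
    show 2 * π * (((0:ℤ):ℝ) - q) * κ = -(2 * π * q * κ) by push_cast; ring, sinc_neg]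
  push_cast
  ring

lemma kernelEigenvalue_neg_natCast_sub_zero (κ : ℝ) {q : ℕ} (hq : 0 < q) (σ : ℝ) (l : ℕ) :
    kernelEigenvalue κ q σ (-l) - kernelEigenvalue κ q σ 0
      = ((chi1 κ l q * Real.cos σ : ℝ) : ℂ) + Complex.I * ((chi2 κ l q * Real.sin σ : ℝ) : ℂ) := by
  rw [kernelEigenvalue, kernelEigenvalue, chi1_eq_sinc κ hq, chi2_eq_sinc κ hq,
    Complex.exp_ofReal_mul_I, exp_neg_ofReal_mul_I,
    show 2 * π * (((0:ℤ):ℝ) + q) * κ = 2 * π * q * κ by push_cast; ring,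
    show 2 * π * (((0:ℤ):ℝ) - q) * κ = -(2 * π * q * κ) by push_cast; ring,
    show 2 * π * (((-l:ℤ):ℝ) + q) * κ = -(2 * π * ((l:ℝ) - q) * κ) by push_cast; ring,
    show 2 * π * (((-l:ℤ):ℝ) - q) * κ = -(2 * π * ((l:ℝ) + q) * κ) by push_cast; ring,
    sinc_neg, sinc_neg, sinc_neg]
  push_cast
  ring

lemma ae_integral_circleKernel_mul_eq {κ : ℝ} (hκ0 : 0 ≤ κ) (hκ : κ ≤ 1 / 2) {q : ℕ}
    {σ b₁ : ℝ} {ev : ℂ} {φ : ℝ → ℂ} (hφ : Integrable φ muI)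
    (heig : ∀ᵐ x ∂muI, Lop κ q σ b₁ φ x = ev * φ x) :
    ∀ᵐ x ∂muI, ∫ y, circleKernel κ q σ (y - x) * φ y ∂muI
      = (ev + kernelEigenvalue κ q σ 0 + b₁) * φ x := by
  filter_upwards [heig, ae_restrict_mem measurableSet_Icc] with x hx hxI
  have hKm : AEStronglyMeasurable (fun y => circleKernel κ q σ (y - x)) muI :=
    ((measurable_circleKernel κ q σ).comp (measurable_id.sub_const x)).aestronglyMeasurable
  have hKb : ∀ᵐ y ∂muI, ‖circleKernel κ q σ (y - x)‖ ≤ 1 :=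
    ae_of_all _ fun y => norm_circleKernel_le κ q σ _
  have hsplit : ∫ y in Icc (0:ℝ) 1, (Wnn κ x y : ℂ) * (Real.cos (2 * π * q * (y - x) + σ) : ℂ)
        * (φ y - φ x)
      = ∫ y, circleKernel κ q σ (y - x) * φ y ∂muI
        - ∫ y, circleKernel κ q σ (y - x) * φ x ∂muI := by
    rw [← integral_sub (hφ.bdd_mul hKm hKb) ((integrable_const (φ x)).bdd_mul hKm hKb)]
    refine setIntegral_congr_fun measurableSet_Icc fun y hy => ?_
    rw [← Wnn_mul_cos_eq_circleKernel κ q σ hxI hy]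
    ring
  rw [Lop, hsplit, integral_mul_const, integral_muI (fun y => circleKernel κ q σ (y - x)),
    integral_circleKernel_sub hκ0 hκ] at hx
  linear_combination hx

end NearestNeighbor

open NearestNeighbor in
theorem stmt10_general (κ : ℝ) (q : ℕ) (σ b₁ : ℝ)
    (hκ : κ ∈ Set.Ioc (0:ℝ) (1/2)) (hq : 0 < q)
    (ev : ℂ) (φ : ℝ → ℂ) (hφ : MemLp φ 2 muI) (hφ0 : ¬ φ =ᵐ[muI] 0)
    (heig : ∀ᵐ x ∂muI, Lop κ q σ b₁ φ x = ev * φ x) :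
    ev = -(b₁:ℂ) ∨ ∃ l : ℕ, 0 < l ∧
      (ev = ((chi1 κ l q * Real.cos σ - b₁ : ℝ) : ℂ)
              - Complex.I * ((chi2 κ l q * Real.sin σ : ℝ) : ℂ) ∨
       ev = ((chi1 κ l q * Real.cos σ - b₁ : ℝ) : ℂ)
              + Complex.I * ((chi2 κ l q * Real.sin σ : ℝ) : ℂ)) := by
  obtain ⟨hκ0, hκ⟩ := hκ
  obtain ⟨n, hn⟩ := exists_integral_expMode_mul_ne_zero hφ hφ0
  have hev : ev + kernelEigenvalue κ q σ 0 + b₁ = kernelEigenvalue κ q σ (-n) :=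
    eq_of_integral_mul_ne_zero (K := fun x y => circleKernel κ q σ (y - x))
      ((measurable_circleKernel κ q σ).comp
        (measurable_snd.sub measurable_fst)).aestronglyMeasurable
      (fun x y => norm_circleKernel_le κ q σ (y - x))
      (continuous_expMode n).aestronglyMeasurable (fun x => (norm_expMode n x).le)
      (hφ.integrable one_le_two)
      (ae_integral_circleKernel_mul_eq hκ0.le hκ (hφ.integrable one_le_two) heig)
      (ae_of_all _ fun y => by
        rw [integral_muI, integral_expMode_mul_circleKernel_sub hκ0.le hκ])
      hn
  rcases lt_trichotomy n 0 with hneg | rfl | hpos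
  · have h := kernelEigenvalue_natCast_sub_zero κ hq σ (-n).toNat
    rw [Int.toNat_of_nonneg (by omega)] at h
    refine Or.inr ⟨(-n).toNat, by omega, Or.inl ?_⟩
    push_cast at h ⊢
    linear_combination hev + h
  · rw [neg_zero] at hev
    left
    linear_combination hev
  · have h := kernelEigenvalue_neg_natCast_sub_zero κ hq σ n.toNat
    rw [Int.toNat_of_nonneg hpos.le] at h
    refine Or.inr ⟨n.toNat, by omega, Or.inr ?_⟩
    push_cast at h ⊢
    linear_combination hev + h

/-- Every eigenvalue of `ℒ` is `−b₁` or of the form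
`χ₁(κ;ℓ,q) cos σ − b₁ ∓ i χ₂(κ;ℓ,q) sin σ` for some positive integer `ℓ`. -/
theorem stmt10 (κ : ℝ) (q : ℕ) (σ b₁ : ℝ)
    (hκ : κ ∈ Set.Ioc (0:ℝ) (1/2)) (hq : 0 < q)
    (hσ : σ ∈ Set.Ioo (-(π/2)) (π/2))
    (ev : ℂ) (φ : ℝ → ℂ) (hφ : MemLp φ 2 muI) (hφ0 : ¬ φ =ᵐ[muI] 0)
    (heig : ∀ᵐ x ∂muI, Lop κ q σ b₁ φ x = ev * φ x) :
    ev = -(b₁:ℂ) ∨ ∃ l : ℕ, 0 < l ∧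
      (ev = ((chi1 κ l q * Real.cos σ - b₁ : ℝ) : ℂ)
              - Complex.I * ((chi2 κ l q * Real.sin σ : ℝ) : ℂ) ∨
       ev = ((chi1 κ l q * Real.cos σ - b₁ : ℝ) : ℂ)
              + Complex.I * ((chi2 κ l q * Real.sin σ : ℝ) : ℂ)) :=
  stmt10_general κ q σ b₁ hκ hq ev φ hφ hφ0 heig
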